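/- Let (W,w) be a fusion frame for H. Then a fusion frame (V,v) is a Q-component-preserving dual fusion frame of (W,w) if and only if there exists a left inverse A of T*_{W,w} such that V_i = A M_i 𝒲 for each i = 1,…,m and Q = Q_{A,v}. Moreover, every left inverse of T*_{W,w} is of the form T_{V,v} Q where (V,v) is some Q-component-preserving dual fusion frame of (W,w). -/

import Mathlib

noncomputable section

open scoped InnerProductSpace

variable {𝕜 : Type} [RCLike 𝕜]
variable {H : Type} [NormedAddCommGroup H] [InnerProductSpace 𝕜 H] [FiniteDimensional 𝕜 H]
variable {m : ℕ}

/-- The Hilbert space `𝒲 = ⊕ᵢ Wᵢ` of a fusion sequence, with the ℓ² inner product. -/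
abbrev FFSpace (W : Fin m → Submodule 𝕜 H) : Type := PiLp 2 (fun i => ↥(W i))

/-- The synthesis operator `T_{W,w} : 𝒲 → H`, `(fᵢ)ᵢ ↦ Σᵢ wᵢ fᵢ`. -/
def synthOp (W : Fin m → Submodule 𝕜 H) (w : Fin m → ℝ) : FFSpace W →ₗ[𝕜] H where
  toFun f := ∑ i, (w i : 𝕜) • (f i : H)
  map_add' f g := by
    simp [Finset.sum_add_distrib, smul_add]
  map_smul' c f := by
    simp [Finset.smul_sum]
    congr 1; funext i; rw [smul_comm]

/-- The analysis operator `T*_{W,w} : H → 𝒲`, `f ↦ (wᵢ π_{Wᵢ} f)ᵢ`. -/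
def analysisOp (W : Fin m → Submodule 𝕜 H) (w : Fin m → ℝ) : H →ₗ[𝕜] FFSpace W where
  toFun f := WithLp.toLp 2 (fun i => (w i : 𝕜) • (Submodule.orthogonalProjectionOnto (W i) f))
  map_add' f g := by
    refine PiLp.ext fun i => ?_; simp [smul_add]
  map_smul' c f := by
    refine PiLp.ext fun i => ?_; simp; rw [smul_comm]

/-- The coordinate operator `M_{J,W} : 𝒲 → 𝒲`, keeping the coordinates in `J`. -/
def MJ (W : Fin m → Submodule 𝕜 H) (J : Finset (Fin m)) : FFSpace W →ₗ[𝕜] FFSpace W where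
  toFun f := WithLp.toLp 2 (fun j => if j ∈ J then f j else 0)
  map_add' f g := by
    refine PiLp.ext fun j => ?_; by_cases h : j ∈ J <;> simp [h]
  map_smul' c f := by
    refine PiLp.ext fun j => ?_; by_cases h : j ∈ J <;> simp [h]

/-- `Q : 𝒲 → 𝒱` is block-diagonal if `Q M_{j,W} 𝒲 ⊆ M_{j,V} 𝒱` for all `j`. -/
def IsBlockDiagonal (W V : Fin m → Submodule 𝕜 H) (Q : FFSpace W →ₗ[𝕜] FFSpace V) : Prop :=
  ∀ j, LinearMap.range (Q ∘ₗ MJ W {j}) ≤ LinearMap.range (MJ V {j})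

/-- `Q : 𝒲 → 𝒱` is component preserving if `Q M_{j,W} 𝒲 = M_{j,V} 𝒱` for all `j`. -/
def IsComponentPreserving (W V : Fin m → Submodule 𝕜 H) (Q : FFSpace W →ₗ[𝕜] FFSpace V) : Prop :=
  ∀ j, LinearMap.range (Q ∘ₗ MJ W {j}) = LinearMap.range (MJ V {j})

/-- The orthogonal projection onto `U` as an endomorphism of `H`. -/
def projL (U : Submodule 𝕜 H) : H →ₗ[𝕜] H :=
  U.subtype ∘ₗ (Submodule.orthogonalProjectionOnto U : H →L[𝕜] U).toLinearMap

/-- The map `Q_{A,v} : 𝒲 → ⊕ᵢ A Mᵢ 𝒲`, `(f_j)_j ↦ ((1/vᵢ) A Mᵢ (f_j)_j)ᵢ`. -/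
def QAv (W : Fin m → Submodule 𝕜 H) (A : FFSpace W →ₗ[𝕜] H) (v : Fin m → ℝ) :
    FFSpace W →ₗ[𝕜] FFSpace (fun i => LinearMap.range (A ∘ₗ MJ W {i})) where
  toFun f := WithLp.toLp 2 (fun i => ⟨(v i : 𝕜)⁻¹ • A (MJ W {i} f),
    Submodule.smul_mem _ _ (LinearMap.mem_range.mpr ⟨f, rfl⟩)⟩)
  map_add' f g := by
    refine PiLp.ext fun i => ?_; apply Subtype.ext; simp [smul_add]
  map_smul' c f := by
    refine PiLp.ext fun i => ?_; apply Subtype.ext; simp; rw [smul_comm]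

end

/-! A component-preserving `Q` is block diagonal, so `A := T_{V,v} Q` recovers each block as
`(Q f)ᵢ = vᵢ⁻¹ A Mᵢ f`, and duality says exactly that `A` is a left inverse of `T*_{W,w}`.
Conversely, for any left inverse `A` these formulas define a component-preserving `Q` with
`T_{V,v} Q = A`, and the `Vᵢ = A Mᵢ 𝒲` span `H` because `A` is onto. -/

section

variable {𝕜 : Type} [RCLike 𝕜] {H : Type} [NormedAddCommGroup H] [InnerProductSpace 𝕜 H]
  {m : ℕ} {W V : Fin m → Submodule 𝕜 H}

theorem MJ_apply (J : Finset (Fin m)) (f : FFSpace W) (j : Fin m) :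
    MJ W J f j = if j ∈ J then f j else 0 := rfl

@[simp]
theorem MJ_singleton_apply_self (i : Fin m) (f : FFSpace W) : MJ W {i} f i = f i := by
  simp [MJ_apply]

@[simp]
theorem MJ_singleton_apply_of_ne {i j : Fin m} (h : j ≠ i) (f : FFSpace W) :
    MJ W {i} f j = 0 := by
  simp [MJ_apply, h]

theorem MJ_singleton_idem (i : Fin m) (f : FFSpace W) : MJ W {i} (MJ W {i} f) = MJ W {i} f := by
  refine PiLp.ext fun k => ?_
  by_cases hk : k = i <;> simp [MJ_apply, hk]

theorem MJ_singleton_MJ_singleton_of_ne {i j : Fin m} (h : i ≠ j) (f : FFSpace W) :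
    MJ W {i} (MJ W {j} f) = 0 := by
  refine PiLp.ext fun k => ?_
  by_cases hk : k = i
  · subst hk; simp [h]
  · simp [hk]

theorem sum_MJ_singleton (f : FFSpace W) : ∑ i, MJ W {i} f = f := by
  refine PiLp.ext fun j => ?_
  simp [WithLp.ofLp_sum, Finset.sum_apply, MJ_apply]

theorem mem_range_MJ_singleton {j : Fin m} {e : FFSpace V} :
    e ∈ LinearMap.range (MJ V {j}) ↔ ∀ k, k ≠ j → e k = 0 := by
  refine ⟨?_, fun h => ⟨e, PiLp.ext fun k => ?_⟩⟩
  · rintro ⟨g, rfl⟩ k hk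
    exact MJ_singleton_apply_of_ne hk g
  · by_cases hk : k = j
    · subst hk; simp
    · simp [hk, h k hk]

theorem synthOp_apply (v : Fin m → ℝ) (g : FFSpace V) :
    synthOp V v g = ∑ i, (v i : 𝕜) • (g i : H) := rfl

theorem synthOp_of_mem_range_MJ_singleton (v : Fin m → ℝ) {j : Fin m} {g : FFSpace V}
    (hg : g ∈ LinearMap.range (MJ V {j})) : synthOp V v g = (v j : 𝕜) • (g j : H) := by
  rw [synthOp_apply, Finset.sum_eq_single j (fun k _ hk => ?_) (by simp)]
  simp [mem_range_MJ_singleton.mp hg k hk]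

theorem iSup_range_comp_MJ_singleton (A : FFSpace W →ₗ[𝕜] H) :
    ⨆ i, LinearMap.range (A ∘ₗ MJ W {i}) = LinearMap.range A := by
  refine le_antisymm (iSup_le fun i => LinearMap.range_comp_le_range _ _) ?_
  rintro _ ⟨f, rfl⟩
  rw [← sum_MJ_singleton f, map_sum]
  exact Submodule.sum_mem _ fun i _ => Submodule.mem_iSup_of_mem i ⟨f, rfl⟩

theorem QAv_apply (A : FFSpace W →ₗ[𝕜] H) (v : Fin m → ℝ) (f : FFSpace W) (i : Fin m) :
    (QAv W A v f i : H) = (v i : 𝕜)⁻¹ • A (MJ W {i} f) := rfl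

theorem IsComponentPreserving.isBlockDiagonal {Q : FFSpace W →ₗ[𝕜] FFSpace V}
    (hQ : IsComponentPreserving W V Q) : IsBlockDiagonal W V Q :=
  fun j => (hQ j).le

namespace IsBlockDiagonal

variable {Q : FFSpace W →ₗ[𝕜] FFSpace V} (hQ : IsBlockDiagonal W V Q)
include hQ

theorem apply_MJ_singleton_mem_range (f : FFSpace W) (j : Fin m) :
    Q (MJ W {j} f) ∈ LinearMap.range (MJ V {j}) :=
  hQ j ⟨f, rfl⟩

theorem apply_eq_apply_MJ_singleton (f : FFSpace W) (i : Fin m) : Q f i = Q (MJ W {i} f) i := by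
  conv_lhs => rw [← sum_MJ_singleton f, map_sum]
  rw [WithLp.ofLp_sum, Finset.sum_apply, Finset.sum_eq_single i (fun j _ hj => ?_) (by simp)]
  exact mem_range_MJ_singleton.mp (hQ.apply_MJ_singleton_mem_range f j) i (Ne.symm hj)

theorem apply_eq_smul_synthOp_comp {v : Fin m → ℝ} {i : Fin m} (hv : v i ≠ 0) (f : FFSpace W) :
    (Q f i : H) = (v i : 𝕜)⁻¹ • (synthOp V v ∘ₗ Q) (MJ W {i} f) := by
  rw [LinearMap.comp_apply,
    synthOp_of_mem_range_MJ_singleton v (hQ.apply_MJ_singleton_mem_range f i), smul_smul,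
    inv_mul_cancel₀ (RCLike.ofReal_ne_zero.mpr hv), one_smul, hQ.apply_eq_apply_MJ_singleton]

end IsBlockDiagonal

theorem IsComponentPreserving.eq_range_synthOp_comp {Q : FFSpace W →ₗ[𝕜] FFSpace V}
    (hQ : IsComponentPreserving W V Q) {v : Fin m → ℝ} {i : Fin m} (hv : v i ≠ 0) :
    V i = LinearMap.range ((synthOp V v ∘ₗ Q) ∘ₗ MJ W {i}) := by
  refine le_antisymm (fun g hg => ?_) ?_
  · obtain ⟨f, hf⟩ : WithLp.toLp 2 (Pi.single i ⟨g, hg⟩) ∈ LinearMap.range (Q ∘ₗ MJ W {i}) := by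
      rw [hQ i, mem_range_MJ_singleton]
      exact fun k hk => Pi.single_eq_of_ne hk _
    have hg : g = (Q (MJ W {i} f) i : H) := by
      rw [← LinearMap.comp_apply, hf, WithLp.ofLp_toLp, Pi.single_eq_same]
    rw [hg, hQ.isBlockDiagonal.apply_eq_smul_synthOp_comp hv, MJ_singleton_idem]
    exact Submodule.smul_mem _ _ ⟨f, rfl⟩
  · rintro _ ⟨f, rfl⟩
    rw [LinearMap.comp_apply, LinearMap.comp_apply, synthOp_of_mem_range_MJ_singleton v
      (hQ.isBlockDiagonal.apply_MJ_singleton_mem_range f i)]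
    exact Submodule.smul_mem _ _ (Q (MJ W {i} f) i).2

section OfApply

variable {A : FFSpace W →ₗ[𝕜] H} {v : Fin m → ℝ} {Q : FFSpace W →ₗ[𝕜] FFSpace V}

theorem synthOp_comp_eq_of_apply (hv : ∀ i, v i ≠ 0)
    (hQ : ∀ f i, (Q f i : H) = (v i : 𝕜)⁻¹ • A (MJ W {i} f)) : synthOp V v ∘ₗ Q = A := by
  ext f
  have hcoord : ∀ i, (v i : 𝕜) • (Q f i : H) = A (MJ W {i} f) := fun i => by
    rw [hQ, smul_smul, mul_inv_cancel₀ (RCLike.ofReal_ne_zero.mpr (hv i)), one_smul]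
  rw [LinearMap.comp_apply, synthOp_apply, Finset.sum_congr rfl fun i _ => hcoord i, ← map_sum,
    sum_MJ_singleton]

theorem isComponentPreserving_of_apply (hv : ∀ i, v i ≠ 0)
    (hV : ∀ i, V i = LinearMap.range (A ∘ₗ MJ W {i}))
    (hQ : ∀ f i, (Q f i : H) = (v i : 𝕜)⁻¹ • A (MJ W {i} f)) : IsComponentPreserving W V Q := by
  intro j
  refine le_antisymm ?_ fun e he => ?_
  · rintro _ ⟨f, rfl⟩
    refine mem_range_MJ_singleton.mpr fun k hk => Subtype.ext ?_
    rw [LinearMap.comp_apply, hQ, MJ_singleton_MJ_singleton_of_ne hk, map_zero, smul_zero]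
    rfl
  · obtain ⟨f, hf⟩ : (e j : H) ∈ LinearMap.range (A ∘ₗ MJ W {j}) := hV j ▸ (e j).2
    refine ⟨(v j : 𝕜) • f, PiLp.ext fun k => Subtype.ext ?_⟩
    rw [LinearMap.comp_apply, hQ]
    by_cases hk : k = j
    · subst hk
      rw [MJ_singleton_idem, map_smul, map_smul, smul_smul,
        inv_mul_cancel₀ (RCLike.ofReal_ne_zero.mpr (hv k)), one_smul, ← hf, LinearMap.comp_apply]
    · rw [MJ_singleton_MJ_singleton_of_ne hk, map_zero, smul_zero,
        mem_range_MJ_singleton.mp he k hk]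
      rfl

theorem dualFusionFrame_of_leftInverse [FiniteDimensional 𝕜 H] {w : Fin m → ℝ}
    (hv : ∀ i, v i ≠ 0) (hA : A ∘ₗ analysisOp W w = LinearMap.id)
    (hV : ∀ i, V i = LinearMap.range (A ∘ₗ MJ W {i}))
    (hQ : ∀ f i, (Q f i : H) = (v i : 𝕜)⁻¹ • A (MJ W {i} f)) :
    (⨆ i, V i = ⊤) ∧ synthOp V v ∘ₗ Q ∘ₗ analysisOp W w = LinearMap.id ∧
      IsComponentPreserving W V Q ∧ A = synthOp V v ∘ₗ Q := by
  have hTQ : synthOp V v ∘ₗ Q = A := synthOp_comp_eq_of_apply hv hQ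
  refine ⟨?_, by rw [← LinearMap.comp_assoc, hTQ, hA],
    isComponentPreserving_of_apply hv hV hQ, hTQ.symm⟩
  rw [iSup_congr hV, iSup_range_comp_MJ_singleton,
    LinearMap.range_eq_top_of_surjective _ (LinearMap.surjective_of_comp_eq_id _ _ hA)]

end OfApply

end

theorem componentPreserving_dual_iff_leftInverse_general
    {𝕜 : Type} [RCLike 𝕜] {H : Type} [NormedAddCommGroup H] [InnerProductSpace 𝕜 H]
    [FiniteDimensional 𝕜 H] {m : ℕ}
    (W : Fin m → Submodule 𝕜 H) (w : Fin m → ℝ) :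
    (∀ (V : Fin m → Submodule 𝕜 H) (v : Fin m → ℝ), (∀ i, 0 < v i) →
      ∀ Q : FFSpace W →ₗ[𝕜] FFSpace V,
      ((⨆ i, V i = ⊤) ∧ synthOp V v ∘ₗ Q ∘ₗ analysisOp W w = LinearMap.id ∧
          IsComponentPreserving W V Q) ↔
        (∃ A : FFSpace W →ₗ[𝕜] H, A ∘ₗ analysisOp W w = LinearMap.id ∧
          (∀ i, V i = LinearMap.range (A ∘ₗ MJ W {i})) ∧
          (∀ f i, ((Q f) i : H) = (v i : 𝕜)⁻¹ • A (MJ W {i} f)))) ∧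
    (∀ A : FFSpace W →ₗ[𝕜] H, A ∘ₗ analysisOp W w = LinearMap.id →
      ∃ (V : Fin m → Submodule 𝕜 H) (v : Fin m → ℝ), (∀ i, 0 < v i) ∧
        ∃ Q : FFSpace W →ₗ[𝕜] FFSpace V,
          (⨆ i, V i = ⊤) ∧ synthOp V v ∘ₗ Q ∘ₗ analysisOp W w = LinearMap.id ∧
          IsComponentPreserving W V Q ∧ A = synthOp V v ∘ₗ Q) := by
  refine ⟨fun V v hv Q => ⟨fun ⟨_, hdual, hQ⟩ => ?_, fun ⟨A, hA, hV, hQA⟩ => ?_⟩, fun A hA => ?_⟩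
  · exact ⟨synthOp V v ∘ₗ Q, by rwa [LinearMap.comp_assoc],
      fun i => hQ.eq_range_synthOp_comp (hv i).ne',
      fun f i => hQ.isBlockDiagonal.apply_eq_smul_synthOp_comp (hv i).ne' f⟩
  · obtain ⟨hspan, hdual, hQ, -⟩ := dualFusionFrame_of_leftInverse (fun i => (hv i).ne') hA hV hQA
    exact ⟨hspan, hdual, hQ⟩
  · exact ⟨_, fun _ => 1, fun _ => one_pos, QAv W A fun _ => 1,
      dualFusionFrame_of_leftInverse (fun _ => one_ne_zero) hA (fun _ => rfl) (QAv_apply A _)⟩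

/-- characterization of component preserving dual fusion frames of a fusion
frame `(W,w)` via the left inverses of the analysis operator `T*_{W,w}`; moreover every
left inverse of `T*_{W,w}` arises as `T_{V,v} Q` for some `Q`-component-preserving dual
fusion frame `(V,v)`. -/
theorem componentPreserving_dual_iff_leftInverse
    {𝕜 : Type} [RCLike 𝕜] {H : Type} [NormedAddCommGroup H] [InnerProductSpace 𝕜 H]
    [FiniteDimensional 𝕜 H] {m : ℕ}
    (W : Fin m → Submodule 𝕜 H) (w : Fin m → ℝ) (hw : ∀ i, 0 < w i)
    (hW : ⨆ i, W i = ⊤) :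
    (∀ (V : Fin m → Submodule 𝕜 H) (v : Fin m → ℝ), (∀ i, 0 < v i) →
      ∀ Q : FFSpace W →ₗ[𝕜] FFSpace V,
      ((⨆ i, V i = ⊤) ∧ synthOp V v ∘ₗ Q ∘ₗ analysisOp W w = LinearMap.id ∧
          IsComponentPreserving W V Q) ↔
        (∃ A : FFSpace W →ₗ[𝕜] H, A ∘ₗ analysisOp W w = LinearMap.id ∧
          (∀ i, V i = LinearMap.range (A ∘ₗ MJ W {i})) ∧
          (∀ f i, ((Q f) i : H) = (v i : 𝕜)⁻¹ • A (MJ W {i} f)))) ∧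
    (∀ A : FFSpace W →ₗ[𝕜] H, A ∘ₗ analysisOp W w = LinearMap.id →
      ∃ (V : Fin m → Submodule 𝕜 H) (v : Fin m → ℝ), (∀ i, 0 < v i) ∧
        ∃ Q : FFSpace W →ₗ[𝕜] FFSpace V,
          (⨆ i, V i = ⊤) ∧ synthOp V v ∘ₗ Q ∘ₗ analysisOp W w = LinearMap.id ∧
          IsComponentPreserving W V Q ∧ A = synthOp V v ∘ₗ Q) :=
  componentPreserving_dual_iff_leftInverse_general W w
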